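/- For every set S ⊆ ℝ³ with two-dimensional coordinate projections S₁₂, S₁₃, S₂₃, the packing dimension satisfies 2·dim_p(S) ≤ dim_p(S₁₂) + dim_p(S₁₃) + dim_p(S₂₃). -/

import Mathlib

/-!
Discretize at scale `ε` into the grid of cubes of side `ε`. A set covered by `N` balls of radius
`ε` meets at most `9N` grid squares of `ℝ²`, and a set meeting `M` grid cubes of `ℝ³` is covered
by `M` balls, so the discrete Loomis–Whitney inequality `|A|² ≤ |A₁₂| |A₁₃| |A₂₃|` (Cauchy–Schwarz
over the fibres of `A → A₁₂`) gives `N(ε, S)² ≤ 729 N(ε, S₁₂) N(ε, S₁₃) N(ε, S₂₃)`. Taking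
`log / log (1/ε)` and `limsup` yields the inequality for upper box dimension, and it passes to
packing dimension because any countable covers of the three projections pull back to a countable
cover of `S` by the pieces `S ∩ π₁₂⁻¹ Aᵢ ∩ π₁₃⁻¹ Bⱼ ∩ π₂₃⁻¹ Cₖ`.
-/

open scoped ENNReal

/-- Extended-real logarithm of an `ℝ≥0∞` value. -/
noncomputable def elog (x : ℝ≥0∞) : EReal :=
  if x = ⊤ then (⊤ : EReal) else ((Real.log x.toReal : ℝ) : EReal)

/-- Minimal number of `ε`-balls needed to cover `s` (`⊤` if no finite cover exists). -/
noncomputable def coveringNumber {α : Type*} [PseudoMetricSpace α] (ε : ℝ) (s : Set α) : ℝ≥0∞ :=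
  ⨅ (t : Finset α) (_ : s ⊆ ⋃ x ∈ t, Metric.ball x ε), (t.card : ℝ≥0∞)

/-- Upper box (Minkowski) dimension: `limsup log N(1/n, s) / log n`. -/
noncomputable def upperBoxDim {α : Type*} [PseudoMetricSpace α] (s : Set α) : EReal :=
  Filter.limsup
    (fun n : ℕ => elog (coveringNumber (1 / n) s) * (((Real.log n)⁻¹ : ℝ) : EReal))
    Filter.atTop

/-- Packing dimension: infimum over countable covers of the supremum of the
upper box dimensions of the pieces. -/
noncomputable def packingDim {α : Type*} [PseudoMetricSpace α] (s : Set α) : EReal :=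
  ⨅ (c : ℕ → Set α) (_ : s ⊆ ⋃ n, c n), ⨆ n, upperBoxDim (c n)

open Filter Topology

section LoomisWhitney

open Finset

variable {α β γ : Type*} [DecidableEq α] [DecidableEq β] [DecidableEq γ]

theorem card_sq_le_card_image_mul_card_image_mul_card_image (A : Finset (α × β × γ)) :
    #A ^ 2 ≤ #(A.image fun p => (p.1, p.2.1)) * #(A.image fun p => (p.1, p.2.2)) *
      #(A.image fun p => (p.2.1, p.2.2)) := by
  set π₁₂ : α × β × γ → α × β := fun p => (p.1, p.2.1)
  set pairs := (A ×ˢ A).filter fun xy => π₁₂ xy.1 = π₁₂ xy.2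
  have card_pairs : #pairs = ∑ q ∈ A.image π₁₂, #{x ∈ A | π₁₂ x = q} ^ 2 := by
    rw [card_eq_sum_card_fiberwise (f := fun xy => π₁₂ xy.1) (t := A.image π₁₂)
      fun xy hxy => mem_image_of_mem _ (mem_product.1 (mem_filter.1 hxy).1).1]
    refine sum_congr rfl fun q _ => ?_
    rw [sq, ← card_product]
    congr 1
    ext ⟨x, y⟩
    simp only [mem_filter, mem_product]
    grind
  have cauchy_schwarz : #A ^ 2 ≤ #(A.image π₁₂) * #pairs := by
    rw [card_eq_sum_card_image π₁₂ A, card_pairs]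
    exact sq_sum_le_card_mul_sum_sq
  -- `(x, y) ∈ pairs` is determined by `(x₁, x₃)` and `(y₂, y₃)`, as `x₁ = y₁` and `x₂ = y₂`
  have card_pairs_le :
      #pairs ≤ #(A.image fun p => (p.1, p.2.2)) * #(A.image fun p => (p.2.1, p.2.2)) := by
    rw [← card_product]
    refine card_le_card_of_injOn (fun xy => ((xy.1.1, xy.1.2.2), (xy.2.2.1, xy.2.2.2)))
      (fun xy hxy => ?_) fun xy hxy xy' hxy' h => ?_
    · obtain ⟨hx, hy⟩ := mem_product.1 (mem_filter.1 hxy).1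
      exact mem_product.2 ⟨mem_image_of_mem _ hx, mem_image_of_mem _ hy⟩
    · obtain ⟨⟨x₁, x₂, x₃⟩, ⟨y₁, y₂, y₃⟩⟩ := xy
      obtain ⟨⟨x₁', x₂', x₃'⟩, ⟨y₁', y₂', y₃'⟩⟩ := xy'
      simp only [pairs, π₁₂, coe_filter, Set.mem_ofPred_eq, Prod.mk.injEq] at hxy hxy' h ⊢
      grind
  calc #A ^ 2 ≤ #(A.image π₁₂) * #pairs := cauchy_schwarz
    _ ≤ _ := by rw [mul_assoc]; exact Nat.mul_le_mul_left _ card_pairs_le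

end LoomisWhitney

section CoveringNumber

variable {α : Type*} [PseudoMetricSpace α] {ε : ℝ} {s s' : Set α}

theorem coveringNumber_le_card {t : Finset α} (h : s ⊆ ⋃ x ∈ t, Metric.ball x ε) :
    coveringNumber ε s ≤ t.card :=
  iInf₂_le t h

theorem coveringNumber_mono (h : s ⊆ s') : coveringNumber ε s ≤ coveringNumber ε s' :=
  le_iInf₂ fun _ ht => coveringNumber_le_card (h.trans ht)

theorem coveringNumber_empty : coveringNumber ε (∅ : Set α) = 0 :=
  nonpos_iff_eq_zero.1 <| by simpa using coveringNumber_le_card (t := ∅) (Set.empty_subset _)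

theorem one_le_coveringNumber (hs : s.Nonempty) : 1 ≤ coveringNumber ε s := by
  refine le_iInf₂ fun t ht => ?_
  obtain ⟨x, hx⟩ := hs
  obtain ⟨y, hy, -⟩ := Set.mem_iUnion₂.1 (ht hx)
  exact_mod_cast Finset.card_pos.2 ⟨y, hy⟩

theorem exists_card_eq_coveringNumber (h : coveringNumber ε s ≠ ⊤) :
    ∃ t : Finset α, s ⊆ ⋃ x ∈ t, Metric.ball x ε ∧ (t.card : ℝ≥0∞) = coveringNumber ε s := by
  obtain ⟨t₀, ht₀⟩ : ∃ t : Finset α, s ⊆ ⋃ x ∈ t, Metric.ball x ε := by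
    by_contra! hno
    exact h (by simp [coveringNumber, hno])
  obtain ⟨t, ht, hmin⟩ := (measure fun t : Finset α => t.card).wf.has_min
    {t | s ⊆ ⋃ x ∈ t, Metric.ball x ε} ⟨t₀, ht₀⟩
  refine ⟨t, ht, le_antisymm (le_iInf₂ fun t' ht' => ?_) (coveringNumber_le_card ht)⟩
  exact_mod_cast not_lt.1 (hmin t' ht')

end CoveringNumber

theorem elog_zero : elog 0 = 0 := by simp [elog]

theorem elog_eq_log {x : ℝ≥0∞} (hx : x ≠ 0) : elog x = ENNReal.log x := by
  by_cases hx' : x = ⊤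
  · simp [elog, hx']
  · simp [elog, hx', ENNReal.log_pos_real hx hx']

theorem log_le_elog (x : ℝ≥0∞) : ENNReal.log x ≤ elog x := by
  rcases eq_or_ne x 0 with rfl | hx
  · simp
  · exact (elog_eq_log hx).ge

theorem elog_nonneg {x : ℝ≥0∞} (hx : 1 ≤ x) : 0 ≤ elog x := by
  rw [elog_eq_log (one_pos.trans_le hx).ne']
  exact ENNReal.zero_le_log_iff.2 hx

theorem elog_le_elog {x y : ℝ≥0∞} (h : x ≤ y) (hy : 0 ≤ elog y) : elog x ≤ elog y := by
  rcases eq_or_ne x 0 with rfl | hx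
  · rwa [elog_zero]
  · exact (elog_eq_log hx).trans_le ((ENNReal.log_le_log h).trans (log_le_elog y))

theorem two_mul_elog_le {x y₁ y₂ y₃ C : ℝ≥0∞} (h : x ^ 2 ≤ C * y₁ * y₂ * y₃)
    (hC : 0 ≤ elog C) (h₁ : 0 ≤ elog y₁) (h₂ : 0 ≤ elog y₂) (h₃ : 0 ≤ elog y₃) :
    2 * elog x ≤ elog C + elog y₁ + elog y₂ + elog y₃ := by
  rcases eq_or_ne x 0 with rfl | hx
  · rw [elog_zero, mul_zero]
    exact add_nonneg (add_nonneg (add_nonneg hC h₁) h₂) h₃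
  calc 2 * elog x = ENNReal.log (x ^ 2) := by rw [elog_eq_log hx, ENNReal.log_pow]; rfl
    _ ≤ ENNReal.log (C * y₁ * y₂ * y₃) := ENNReal.log_le_log h
    _ = ENNReal.log C + ENNReal.log y₁ + ENNReal.log y₂ + ENNReal.log y₃ := by
      simp only [ENNReal.log_mul_add]
    _ ≤ elog C + elog y₁ + elog y₂ + elog y₃ := by gcongr <;> exact log_le_elog _

section Grid

variable {ε : ℝ}

theorem floor_div_mem_Icc_of_abs_sub_lt (hε : 0 < ε) {x c : ℝ} (h : |x - c| < ε) :
    ⌊x / ε⌋ ∈ Finset.Icc (⌊c / ε⌋ - 1) (⌊c / ε⌋ + 1) := by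
  have h' : |x / ε - c / ε| < 1 := by
    rwa [← sub_div, abs_div, abs_of_pos hε, div_lt_one hε]
  obtain ⟨h₁, h₂⟩ := abs_sub_lt_iff.1 h'
  have hx : ⌊x / ε⌋ ≤ ⌊c / ε⌋ + 1 := by
    rw [← Int.floor_add_one]; exact Int.floor_le_floor (by linarith)
  have hc : ⌊c / ε⌋ ≤ ⌊x / ε⌋ + 1 := by
    rw [← Int.floor_add_one]; exact Int.floor_le_floor (by linarith)
  rw [Finset.mem_Icc]
  omega

theorem abs_sub_floor_div_add_half_mul_lt (hε : 0 < ε) (x : ℝ) :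
    |x - ((⌊x / ε⌋ : ℝ) + 1 / 2) * ε| < ε := by
  have h₁ : (⌊x / ε⌋ : ℝ) * ε ≤ x := (le_div_iff₀ hε).1 (Int.floor_le _)
  have h₂ : x < ((⌊x / ε⌋ : ℝ) + 1) * ε := (div_lt_iff₀ hε).1 (Int.lt_floor_add_one _)
  rw [abs_sub_lt_iff]
  constructor <;> nlinarith

theorem exists_grid_cells_of_subset_balls (hε : 0 < ε) {t : Set (ℝ × ℝ)} {T : Finset (ℝ × ℝ)}
    (h : t ⊆ ⋃ c ∈ T, Metric.ball c ε) :
    ∃ B : Finset (ℤ × ℤ), B.card ≤ 9 * T.card ∧ ∀ q ∈ t, (⌊q.1 / ε⌋, ⌊q.2 / ε⌋) ∈ B := by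
  let neighbours : ℝ × ℝ → Finset (ℤ × ℤ) := fun c =>
    Finset.Icc (⌊c.1 / ε⌋ - 1) (⌊c.1 / ε⌋ + 1) ×ˢ Finset.Icc (⌊c.2 / ε⌋ - 1) (⌊c.2 / ε⌋ + 1)
  refine ⟨T.biUnion neighbours, ?_, fun q hq => ?_⟩
  · refine Finset.card_biUnion_le.trans ?_
    have hcard : ∀ c, (neighbours c).card = 9 := fun c => by
      simp only [neighbours, Finset.card_product, Int.card_Icc,
        show ∀ m : ℤ, m + 1 + 1 - (m - 1) = 3 from fun m => by ring]
      rfl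
    simp [hcard, mul_comm]
  · obtain ⟨c, hc, hqc⟩ := Set.mem_iUnion₂.1 (h hq)
    rw [Metric.mem_ball, Prod.dist_eq, max_lt_iff, Real.dist_eq, Real.dist_eq] at hqc
    exact Finset.mem_biUnion.2 ⟨c, hc, Finset.mem_product.2
      ⟨floor_div_mem_Icc_of_abs_sub_lt hε hqc.1, floor_div_mem_Icc_of_abs_sub_lt hε hqc.2⟩⟩

theorem coveringNumber_le_card_of_grid_cells_subset (hε : 0 < ε) {s : Set (ℝ × ℝ × ℝ)}
    {A : Finset (ℤ × ℤ × ℤ)} (h : ∀ p ∈ s, (⌊p.1 / ε⌋, ⌊p.2.1 / ε⌋, ⌊p.2.2 / ε⌋) ∈ A) :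
    coveringNumber ε s ≤ A.card := by
  classical
  let center : ℤ × ℤ × ℤ → ℝ × ℝ × ℝ := fun a =>
    ((a.1 + 1 / 2) * ε, (a.2.1 + 1 / 2) * ε, (a.2.2 + 1 / 2) * ε)
  refine (coveringNumber_le_card (t := A.image center) fun p hp => ?_).trans
    (by exact_mod_cast Finset.card_image_le)
  refine Set.mem_iUnion₂.2 ⟨_, Finset.mem_image_of_mem center (h p hp), ?_⟩
  simp only [Metric.mem_ball, Prod.dist_eq, max_lt_iff, Real.dist_eq]
  exact ⟨abs_sub_floor_div_add_half_mul_lt hε _, abs_sub_floor_div_add_half_mul_lt hε _,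
    abs_sub_floor_div_add_half_mul_lt hε _⟩

end Grid

section Projections

open Finset

variable {ε : ℝ}

theorem coveringNumber_sq_le_of_subset_balls (hε : 0 < ε) {s : Set (ℝ × ℝ × ℝ)}
    {T₁₂ T₁₃ T₂₃ : Finset (ℝ × ℝ)}
    (h₁₂ : (fun p : ℝ × ℝ × ℝ => (p.1, p.2.1)) '' s ⊆ ⋃ c ∈ T₁₂, Metric.ball c ε)
    (h₁₃ : (fun p : ℝ × ℝ × ℝ => (p.1, p.2.2)) '' s ⊆ ⋃ c ∈ T₁₃, Metric.ball c ε)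
    (h₂₃ : (fun p : ℝ × ℝ × ℝ => (p.2.1, p.2.2)) '' s ⊆ ⋃ c ∈ T₂₃, Metric.ball c ε) :
    coveringNumber ε s ^ 2 ≤ 729 * #T₁₂ * #T₁₃ * #T₂₃ := by
  classical
  obtain ⟨B₁₂, hB₁₂, hs₁₂⟩ := exists_grid_cells_of_subset_balls hε h₁₂
  obtain ⟨B₁₃, hB₁₃, hs₁₃⟩ := exists_grid_cells_of_subset_balls hε h₁₃
  obtain ⟨B₂₃, hB₂₃, hs₂₃⟩ := exists_grid_cells_of_subset_balls hε h₂₃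
  set cell : ℝ × ℝ × ℝ → ℤ × ℤ × ℤ := fun p => (⌊p.1 / ε⌋, ⌊p.2.1 / ε⌋, ⌊p.2.2 / ε⌋)
  have hfin : (cell '' s).Finite := by
    refine ((B₁₂ ×ˢ B₁₃).image fun x => (x.1.1, x.1.2, x.2.2)).finite_toSet.subset ?_
    rintro _ ⟨p, hp, rfl⟩
    exact mem_image.2 ⟨((⌊p.1 / ε⌋, ⌊p.2.1 / ε⌋), (⌊p.1 / ε⌋, ⌊p.2.2 / ε⌋)),
      mem_product.2 ⟨hs₁₂ _ ⟨p, hp, rfl⟩, hs₁₃ _ ⟨p, hp, rfl⟩⟩, rfl⟩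
  set A := hfin.toFinset
  have card_image_le {B : Finset (ℤ × ℤ)} (f : ℤ × ℤ × ℤ → ℤ × ℤ) (hB : ∀ p ∈ s, f (cell p) ∈ B) :
      #(A.image f) ≤ #B := by
    refine card_le_card fun m hm => ?_
    obtain ⟨a, ha, rfl⟩ := mem_image.1 hm
    obtain ⟨p, hp, rfl⟩ := hfin.mem_toFinset.1 ha
    exact hB p hp
  have hA : #A ^ 2 ≤ 729 * #T₁₂ * #T₁₃ * #T₂₃ :=
    calc #A ^ 2 ≤ #(A.image fun p => (p.1, p.2.1)) * #(A.image fun p => (p.1, p.2.2)) *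
          #(A.image fun p => (p.2.1, p.2.2)) :=
        card_sq_le_card_image_mul_card_image_mul_card_image A
      _ ≤ (9 * #T₁₂) * (9 * #T₁₃) * (9 * #T₂₃) := by
        gcongr
        · exact (card_image_le _ fun p hp => hs₁₂ _ ⟨p, hp, rfl⟩).trans hB₁₂
        · exact (card_image_le _ fun p hp => hs₁₃ _ ⟨p, hp, rfl⟩).trans hB₁₃
        · exact (card_image_le _ fun p hp => hs₂₃ _ ⟨p, hp, rfl⟩).trans hB₂₃
      _ = 729 * #T₁₂ * #T₁₃ * #T₂₃ := by ring
  calc coveringNumber ε s ^ 2 ≤ ((#A : ℕ) : ℝ≥0∞) ^ 2 := by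
        gcongr
        exact coveringNumber_le_card_of_grid_cells_subset hε fun p hp =>
          hfin.mem_toFinset.2 ⟨p, hp, rfl⟩
    _ ≤ (729 : ℝ≥0∞) * #T₁₂ * #T₁₃ * #T₂₃ := by exact_mod_cast hA

theorem coveringNumber_sq_le (hε : 0 < ε) (s : Set (ℝ × ℝ × ℝ)) :
    coveringNumber ε s ^ 2 ≤
      729 * coveringNumber ε ((fun p : ℝ × ℝ × ℝ => (p.1, p.2.1)) '' s) *
        coveringNumber ε ((fun p : ℝ × ℝ × ℝ => (p.1, p.2.2)) '' s) *
        coveringNumber ε ((fun p : ℝ × ℝ × ℝ => (p.2.1, p.2.2)) '' s) := by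
  rcases s.eq_empty_or_nonempty with rfl | hs
  · simp [coveringNumber_empty]
  have hne (f : ℝ × ℝ × ℝ → ℝ × ℝ) : coveringNumber ε (f '' s) ≠ 0 :=
    (one_pos.trans_le (one_le_coveringNumber (hs.image f))).ne'
  by_cases htop : coveringNumber ε ((fun p : ℝ × ℝ × ℝ => (p.1, p.2.1)) '' s) = ⊤ ∨
      coveringNumber ε ((fun p : ℝ × ℝ × ℝ => (p.1, p.2.2)) '' s) = ⊤ ∨
      coveringNumber ε ((fun p : ℝ × ℝ × ℝ => (p.2.1, p.2.2)) '' s) = ⊤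
  · refine le_of_le_of_eq le_top ?_
    rcases htop with h | h | h <;> simp [h, hne]
  push Not at htop
  obtain ⟨T₁₂, h₁₂, hT₁₂⟩ := exists_card_eq_coveringNumber htop.1
  obtain ⟨T₁₃, h₁₃, hT₁₃⟩ := exists_card_eq_coveringNumber htop.2.1
  obtain ⟨T₂₃, h₂₃, hT₂₃⟩ := exists_card_eq_coveringNumber htop.2.2
  rw [← hT₁₂, ← hT₁₃, ← hT₂₃]
  exact coveringNumber_sq_le_of_subset_balls hε h₁₂ h₁₃ h₂₃

end Projections

section BoxDimension

variable {α β γ δ : Type*} [PseudoMetricSpace α] [PseudoMetricSpace β] [PseudoMetricSpace γ]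
  [PseudoMetricSpace δ]

noncomputable def boxCountingRatio (s : Set α) (n : ℕ) : EReal :=
  elog (coveringNumber (1 / n) s) * (((Real.log n)⁻¹ : ℝ) : EReal)

theorem upperBoxDim_eq_limsup (s : Set α) :
    upperBoxDim s = limsup (boxCountingRatio s) atTop := rfl

theorem elog_coveringNumber_nonneg (ε : ℝ) (s : Set α) : 0 ≤ elog (coveringNumber ε s) := by
  rcases s.eq_empty_or_nonempty with rfl | hs
  · rw [coveringNumber_empty, elog_zero]
  · exact elog_nonneg (one_le_coveringNumber hs)

theorem inv_log_natCast_nonneg (n : ℕ) : (0 : EReal) ≤ (((Real.log n)⁻¹ : ℝ) : EReal) :=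
  EReal.coe_nonneg.2 (inv_nonneg.2 (Real.log_natCast_nonneg n))

theorem boxCountingRatio_nonneg (s : Set α) : 0 ≤ boxCountingRatio s :=
  fun n => mul_nonneg (elog_coveringNumber_nonneg _ s) (inv_log_natCast_nonneg n)

theorem upperBoxDim_nonneg (s : Set α) : 0 ≤ upperBoxDim s :=
  le_limsup_of_frequently_le (Frequently.of_forall (boxCountingRatio_nonneg s))

theorem upperBoxDim_mono {s s' : Set α} (h : s ⊆ s') : upperBoxDim s ≤ upperBoxDim s' :=
  limsup_le_limsup (Eventually.of_forall fun n =>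
    mul_le_mul_of_nonneg_right
      (elog_le_elog (coveringNumber_mono h) (elog_coveringNumber_nonneg _ s'))
      (inv_log_natCast_nonneg n))

theorem limsup_add_le_of_nonneg {ι : Type*} {f : Filter ι} [f.NeBot] {u v : ι → EReal}
    (hu : 0 ≤ u) (hv : 0 ≤ v) : limsup (u + v) f ≤ limsup u f + limsup v f := by
  have limsup_ne_bot {w : ι → EReal} (hw : 0 ≤ w) : limsup w f ≠ ⊥ :=
    (EReal.bot_lt_zero.trans_le (le_limsup_of_frequently_le (Frequently.of_forall hw))).ne'
  exact EReal.limsup_add_le (.inl (limsup_ne_bot hu)) (.inr (limsup_ne_bot hv))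

theorem tendsto_elog_mul_inv_log_natCast {C : ℝ≥0∞} (hC : C ≠ ⊤) :
    Tendsto (fun n : ℕ => elog C * (((Real.log n)⁻¹ : ℝ) : EReal)) atTop (𝓝 0) := by
  have h : Tendsto (fun n : ℕ => Real.log C.toReal * (Real.log n)⁻¹) atTop (𝓝 0) := by
    simpa using ((Real.tendsto_log_atTop.comp tendsto_natCast_atTop_atTop).inv_tendsto_atTop
      ).const_mul (Real.log C.toReal)
  simpa [elog, hC, ← EReal.coe_mul] using EReal.tendsto_coe.2 h

theorem two_mul_upperBoxDim_le_of_coveringNumber_sq_le {s : Set α} {t₁ : Set β} {t₂ : Set γ}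
    {t₃ : Set δ} {C : ℝ≥0∞} (hC₁ : 1 ≤ C) (hC : C ≠ ⊤)
    (h : ∀ ε > 0, coveringNumber ε s ^ 2 ≤
      C * coveringNumber ε t₁ * coveringNumber ε t₂ * coveringNumber ε t₃) :
    2 * upperBoxDim s ≤ upperBoxDim t₁ + upperBoxDim t₂ + upperBoxDim t₃ := by
  set g : ℕ → EReal := fun n => elog C * (((Real.log n)⁻¹ : ℝ) : EReal)
  have hg : 0 ≤ g := fun n => mul_nonneg (elog_nonneg hC₁) (inv_log_natCast_nonneg n)
  have hr₁ := boxCountingRatio_nonneg t₁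
  have hr₂ := boxCountingRatio_nonneg t₂
  have hr₃ := boxCountingRatio_nonneg t₃
  have hpoint : ∀ᶠ n in atTop, 2 * boxCountingRatio s n ≤
      (g + boxCountingRatio t₁ + boxCountingRatio t₂ + boxCountingRatio t₃) n := by
    filter_upwards [eventually_ge_atTop 1] with n hn
    have hlog := two_mul_elog_le (h (1 / n) (by positivity)) (elog_nonneg hC₁)
      (elog_coveringNumber_nonneg _ t₁) (elog_coveringNumber_nonneg _ t₂)
      (elog_coveringNumber_nonneg _ t₃)
    simp only [boxCountingRatio, g, Pi.add_apply, ← mul_assoc,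
      ← EReal.right_distrib_of_nonneg_of_ne_top (inv_log_natCast_nonneg n) (EReal.coe_ne_top _)]
    exact mul_le_mul_of_nonneg_right hlog (inv_log_natCast_nonneg n)
  calc 2 * upperBoxDim s = limsup (fun n => 2 * boxCountingRatio s n) atTop :=
        (EReal.limsup_const_mul_of_nonneg_of_ne_top zero_le_two (by decide)).symm
    _ ≤ limsup (g + boxCountingRatio t₁ + boxCountingRatio t₂ + boxCountingRatio t₃) atTop :=
        limsup_le_limsup hpoint
    _ ≤ limsup g atTop + limsup (boxCountingRatio t₁) atTop +
          limsup (boxCountingRatio t₂) atTop + limsup (boxCountingRatio t₃) atTop := by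
        refine (limsup_add_le_of_nonneg (add_nonneg (add_nonneg hg hr₁) hr₂) hr₃).trans ?_
        gcongr
        refine (limsup_add_le_of_nonneg (add_nonneg hg hr₁) hr₂).trans ?_
        gcongr
        exact limsup_add_le_of_nonneg hg hr₁
    _ = upperBoxDim t₁ + upperBoxDim t₂ + upperBoxDim t₃ := by
        rw [(tendsto_elog_mul_inv_log_natCast hC).limsup_eq, zero_add, upperBoxDim_eq_limsup,
          upperBoxDim_eq_limsup, upperBoxDim_eq_limsup]

end BoxDimension

theorem EReal.two_mul_iSup_le {ι : Sort*} {u : ι → EReal} {x : EReal} (h : ∀ i, 2 * u i ≤ x) :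
    2 * ⨆ i, u i ≤ x := by
  have h2 : (0 : EReal) < 2 := zero_lt_two
  have h2' : (2 : EReal) ≠ ⊤ := by decide
  rw [mul_comm, ← EReal.le_div_iff_mul_le h2 h2']
  exact iSup_le fun i => (EReal.le_div_iff_mul_le h2 h2').2 (mul_comm (u i) 2 ▸ h i)

section PackingDimension

variable {α β₁ β₂ β₃ : Type*} [PseudoMetricSpace α] [PseudoMetricSpace β₁]
  [PseudoMetricSpace β₂] [PseudoMetricSpace β₃]

theorem packingDim_le_iSup_of_subset_iUnion {ι : Type*} [Countable ι] [Nonempty ι]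
    {s : Set α} {c : ι → Set α} (h : s ⊆ ⋃ i, c i) : packingDim s ≤ ⨆ i, upperBoxDim (c i) := by
  obtain ⟨f, hf⟩ := exists_surjective_nat ι
  calc packingDim s ≤ ⨆ n, upperBoxDim (c (f n)) :=
        iInf₂_le (fun n => c (f n)) (by rwa [hf.iUnion_comp c])
    _ = ⨆ i, upperBoxDim (c i) := hf.iSup_comp fun i => upperBoxDim (c i)

theorem iSup_upperBoxDim_nonneg (c : ℕ → Set α) : 0 ≤ ⨆ n, upperBoxDim (c n) :=
  (upperBoxDim_nonneg (c 0)).trans (le_iSup (fun n => upperBoxDim (c n)) 0)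

theorem packingDim_nonneg (s : Set α) : 0 ≤ packingDim s :=
  le_iInf₂ fun c _ => iSup_upperBoxDim_nonneg c

theorem le_add_packingDim {a b : EReal} (hb : 0 ≤ b) {s : Set α}
    (h : ∀ c : ℕ → Set α, s ⊆ ⋃ n, c n → a ≤ b + ⨆ n, upperBoxDim (c n)) :
    a ≤ b + packingDim s := by
  refine EReal.le_add_of_forall_gt (.inl (ne_bot_of_le_ne_bot EReal.zero_ne_bot hb))
    (.inr (ne_bot_of_le_ne_bot EReal.zero_ne_bot (packingDim_nonneg s))) fun b' hb' d hd => ?_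
  obtain ⟨c, hc⟩ := iInf_lt_iff.1 hd
  obtain ⟨hcover, hcd⟩ := iInf_lt_iff.1 hc
  exact (h c hcover).trans (add_le_add hb'.le hcd.le)

theorem two_mul_packingDim_le_of_covers (f₁ : α → β₁) (f₂ : α → β₂) (f₃ : α → β₃)
    (hdim : ∀ s : Set α, 2 * upperBoxDim s ≤
      upperBoxDim (f₁ '' s) + upperBoxDim (f₂ '' s) + upperBoxDim (f₃ '' s))
    {S : Set α} {c₁ : ℕ → Set β₁} {c₂ : ℕ → Set β₂} {c₃ : ℕ → Set β₃}
    (h₁ : f₁ '' S ⊆ ⋃ n, c₁ n) (h₂ : f₂ '' S ⊆ ⋃ n, c₂ n) (h₃ : f₃ '' S ⊆ ⋃ n, c₃ n) :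
    2 * packingDim S ≤
      (⨆ n, upperBoxDim (c₁ n)) + (⨆ n, upperBoxDim (c₂ n)) + ⨆ n, upperBoxDim (c₃ n) := by
  set e : ℕ × ℕ × ℕ → Set α := fun i => S ∩ f₁ ⁻¹' c₁ i.1 ∩ f₂ ⁻¹' c₂ i.2.1 ∩ f₃ ⁻¹' c₃ i.2.2
  have hS : S ⊆ ⋃ i, e i := by
    intro p hp
    obtain ⟨i, hi⟩ := Set.mem_iUnion.1 (h₁ ⟨p, hp, rfl⟩)
    obtain ⟨j, hj⟩ := Set.mem_iUnion.1 (h₂ ⟨p, hp, rfl⟩)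
    obtain ⟨k, hk⟩ := Set.mem_iUnion.1 (h₃ ⟨p, hp, rfl⟩)
    exact Set.mem_iUnion.2 ⟨(i, j, k), ⟨⟨⟨hp, hi⟩, hj⟩, hk⟩⟩
  have he : ∀ i, 2 * upperBoxDim (e i) ≤
      (⨆ n, upperBoxDim (c₁ n)) + (⨆ n, upperBoxDim (c₂ n)) + ⨆ n, upperBoxDim (c₃ n) := by
    intro i
    refine (hdim (e i)).trans (add_le_add (add_le_add ?_ ?_) ?_)
    · exact (upperBoxDim_mono (Set.image_subset_iff.2 fun p hp => hp.1.1.2)).trans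
        (le_iSup (fun n => upperBoxDim (c₁ n)) i.1)
    · exact (upperBoxDim_mono (Set.image_subset_iff.2 fun p hp => hp.1.2)).trans
        (le_iSup (fun n => upperBoxDim (c₂ n)) i.2.1)
    · exact (upperBoxDim_mono (Set.image_subset_iff.2 fun p hp => hp.2)).trans
        (le_iSup (fun n => upperBoxDim (c₃ n)) i.2.2)
  calc 2 * packingDim S ≤ 2 * ⨆ i, upperBoxDim (e i) := by
        gcongr
        exact packingDim_le_iSup_of_subset_iUnion hS
    _ ≤ _ := EReal.two_mul_iSup_le he

theorem two_mul_packingDim_le_of_upperBoxDim (f₁ : α → β₁) (f₂ : α → β₂) (f₃ : α → β₃)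
    (hdim : ∀ s : Set α, 2 * upperBoxDim s ≤
      upperBoxDim (f₁ '' s) + upperBoxDim (f₂ '' s) + upperBoxDim (f₃ '' s))
    (S : Set α) :
    2 * packingDim S ≤ packingDim (f₁ '' S) + packingDim (f₂ '' S) + packingDim (f₃ '' S) := by
  refine le_add_packingDim (add_nonneg (packingDim_nonneg _) (packingDim_nonneg _))
    fun c₃ h₃ => ?_
  rw [add_right_comm]
  refine le_add_packingDim (add_nonneg (packingDim_nonneg _) (iSup_upperBoxDim_nonneg c₃))
    fun c₂ h₂ => ?_
  rw [add_assoc, add_comm]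
  refine le_add_packingDim (add_nonneg (iSup_upperBoxDim_nonneg c₃) (iSup_upperBoxDim_nonneg c₂))
    fun c₁ h₁ => ?_
  calc 2 * packingDim S ≤ _ := two_mul_packingDim_le_of_covers f₁ f₂ f₃ hdim h₁ h₂ h₃
    _ = _ := by ac_rfl

end PackingDimension

/-- For `S ⊆ ℝ³` and its three two-dimensional coordinate projections,
`2·dim_p S ≤ dim_p S₁₂ + dim_p S₁₃ + dim_p S₂₃`. -/
theorem packingDim_proj_ineq (S : Set (ℝ × ℝ × ℝ)) :
    2 * packingDim S ≤
      packingDim ((fun p : ℝ × ℝ × ℝ => (p.1, p.2.1)) '' S) +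
      packingDim ((fun p : ℝ × ℝ × ℝ => (p.1, p.2.2)) '' S) +
      packingDim ((fun p : ℝ × ℝ × ℝ => (p.2.1, p.2.2)) '' S) :=
  two_mul_packingDim_le_of_upperBoxDim _ _ _ (fun s =>
    two_mul_upperBoxDim_le_of_coveringNumber_sq_le (by norm_num) (by simp) fun ε hε =>
      coveringNumber_sq_le hε s) S
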